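/- Let μ₀ > 0, c, r, d, τ, θ ∈ ℝ, a > 0, b > 0, and let s ∈ ℝ be such that s − r − d·e^{−τs} > 0. Set κ := (s − r − d·e^{−τs}) / (μ₀²·(1 + c²·e^{−τs})) (note 1 + c²e^{−τs} > 0 for real s) and μ̂ := √κ. Let (h_k)_{k≥0} be a sequence of real numbers and suppose that for every k ≥ 1 there exist functions e₁ᵏ, e₂ᵏ : ℝ → ℝ such that: (i) e₁ᵏ is twice continuously differentiable on [−a, 0], satisfies μ₀²·(1 + c²e^{−τs})·(e₁ᵏ)'' = (s − r − de^{−τs})·e₁ᵏ on [−a, 0], e₁ᵏ(−a) = 0 and e₁ᵏ(0) = h_{k−1}; (ii) e₂ᵏ is twice continuously differentiable on [0, b], satisfies the same ODE on [0, b], e₂ᵏ(b) = 0 and (e₂ᵏ)'(0) = (e₁ᵏ)'(0); (iii) h_k = θ·e₂ᵏ(0) + (1 − θ)·h_{k−1}. Then h_k = (1 − θ − θ·coth(μ̂a)·tanh(μ̂b))ᵏ·h_0 for all k ≥ 0. In particular, for equal subdomains a = b one has h_k = (1 − 2θ)ᵏ·h_0; hence if θ = 1/2 then h_k = 0 for all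 k ≥ 1, and if 0 < θ < 1 then |h_k| ≤ |1 − 2θ|ᵏ·|h_0| and h_k → 0 as k → ∞. -/

import Mathlib

/-!
After the Laplace transform every subdomain error solves `e'' = μ² e` with `μ > 0`. Pairing such
a solution with `x ↦ sinh (μ (x - p))`, whose Wronskian with it is constant, turns the Dirichlet
condition at one end into a Dirichlet-to-Neumann relation at the other. On `(-a, 0)` this gives
`e₁'(0) = μ coth (μ a) e₁(0)`, on `(0, b)` it gives `e₂(0) = -tanh (μ b) e₂'(0) / μ`, so one sweep
multiplies the interface value by `1 - θ - θ coth (μ a) tanh (μ b)`, which is `1 - 2θ` when `a = b`.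
-/

open Set Filter

noncomputable def coth (x : ℝ) : ℝ := Real.cosh x / Real.sinh x

lemma coth_mul_tanh {x : ℝ} (hx : x ≠ 0) : coth x * Real.tanh x = 1 := by
  have hsinh : Real.sinh x ≠ 0 := Real.sinh_ne_zero.mpr hx
  rw [coth, Real.tanh_eq_sinh_div_cosh]
  field_simp [(Real.cosh_pos x).ne']

lemma eq_pow_mul_of_succ_eq_mul {h : ℕ → ℝ} {ρ : ℝ} (hstep : ∀ k, h (k + 1) = ρ * h k) (k : ℕ) :
    h k = ρ ^ k * h 0 := by
  induction k with
  | zero => simp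
  | succ n ih => rw [hstep n, ih, pow_succ]; ring

lemma hasDerivAt_sinh_mul_sub (μ p x : ℝ) :
    HasDerivAt (fun x => Real.sinh (μ * (x - p))) (μ * Real.cosh (μ * (x - p))) x := by
  have hlin : HasDerivAt (fun x : ℝ => μ * (x - p)) μ x := by
    simpa using ((hasDerivAt_id x).sub_const p).const_mul μ
  exact ((Real.hasDerivAt_sinh _).comp x hlin).congr_deriv (mul_comm _ _)

lemma hasDerivAt_mul_cosh_mul_sub (μ p x : ℝ) :
    HasDerivAt (fun x => μ * Real.cosh (μ * (x - p))) (μ ^ 2 * Real.sinh (μ * (x - p))) x := by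
  have hlin : HasDerivAt (fun x : ℝ => μ * (x - p)) μ x := by
    simpa using ((hasDerivAt_id x).sub_const p).const_mul μ
  exact (((Real.hasDerivAt_cosh _).comp x hlin).const_mul μ).congr_deriv (by ring)

section SecondOrderODE

variable {l u κ μ : ℝ} {e g g' : ℝ → ℝ}

lemma wronskian_eq_of_derivWithin_derivWithin_eq (hlu : l < u) (he : ContDiffOn ℝ 2 e (Icc l u))
    (hode : ∀ x ∈ Icc l u, derivWithin (derivWithin e (Icc l u)) (Icc l u) x = κ * e x)
    (hg : ∀ x, HasDerivAt g (g' x) x) (hg' : ∀ x, HasDerivAt g' (κ * g x) x) :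
    ∀ x ∈ Icc l u, derivWithin e (Icc l u) x * g x - e x * g' x
      = derivWithin e (Icc l u) l * g l - e l * g' l := by
  have he' : DifferentiableOn ℝ e (Icc l u) := he.differentiableOn (by norm_num)
  have hde : ContDiffOn ℝ 1 (derivWithin e (Icc l u)) (Icc l u) :=
    he.derivWithin (uniqueDiffOn_Icc hlu) (by norm_num)
  have he'' : DifferentiableOn ℝ (derivWithin e (Icc l u)) (Icc l u) :=
    hde.differentiableOn (by norm_num)
  have hW : ∀ x ∈ Icc l u, HasDerivWithinAt
      (fun x => derivWithin e (Icc l u) x * g x - e x * g' x) 0 (Icc l u) x := by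
    intro x hx
    have hd2 : HasDerivWithinAt (derivWithin e (Icc l u)) (κ * e x) (Icc l u) x :=
      hode x hx ▸ (he'' x hx).hasDerivWithinAt
    exact ((hd2.mul (hg x).hasDerivWithinAt).sub
      ((he' x hx).hasDerivWithinAt.mul (hg' x).hasDerivWithinAt)).congr_deriv (by ring)
  refine constant_of_has_deriv_right_zero (fun x hx => (hW x hx).continuousWithinAt) ?_
  exact fun x hx => (hW x (Ico_subset_Icc_self hx)).mono_of_mem_nhdsWithin
    (Icc_mem_nhdsGE_of_mem hx)

variable (hlu : l < u) (he : ContDiffOn ℝ 2 e (Icc l u))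
  (hode : ∀ x ∈ Icc l u, derivWithin (derivWithin e (Icc l u)) (Icc l u) x = μ ^ 2 * e x)
include hlu he hode

lemma derivWithin_right_mul_sinh_of_left_eq_zero (hl : e l = 0) :
    derivWithin e (Icc l u) u * Real.sinh (μ * (u - l)) = μ * Real.cosh (μ * (u - l)) * e u := by
  have hW := wronskian_eq_of_derivWithin_derivWithin_eq hlu he hode
    (hasDerivAt_sinh_mul_sub μ l) (hasDerivAt_mul_cosh_mul_sub μ l) u (right_mem_Icc.mpr hlu.le)
  simp only [sub_self, mul_zero, Real.sinh_zero, hl, zero_mul] at hW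
  linarith

lemma derivWithin_left_mul_sinh_of_right_eq_zero (hu : e u = 0) :
    derivWithin e (Icc l u) l * Real.sinh (μ * (u - l))
      = -(μ * Real.cosh (μ * (u - l)) * e l) := by
  have hW := wronskian_eq_of_derivWithin_derivWithin_eq hlu he hode
    (hasDerivAt_sinh_mul_sub μ u) (hasDerivAt_mul_cosh_mul_sub μ u) u (right_mem_Icc.mpr hlu.le)
  have hswap : μ * (l - u) = -(μ * (u - l)) := by ring
  simp only [sub_self, mul_zero, Real.sinh_zero, hu, zero_mul, hswap, Real.sinh_neg,
    Real.cosh_neg] at hW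
  linarith

end SecondOrderODE

lemma interface_eq_neg_coth_mul_tanh {μ a b : ℝ} {e₁ e₂ : ℝ → ℝ} (hμ : 0 < μ) (ha : 0 < a)
    (hb : 0 < b) (he₁ : ContDiffOn ℝ 2 e₁ (Icc (-a) 0))
    (hode₁ : ∀ x ∈ Icc (-a) 0,
      derivWithin (derivWithin e₁ (Icc (-a) 0)) (Icc (-a) 0) x = μ ^ 2 * e₁ x)
    (hleft : e₁ (-a) = 0) (he₂ : ContDiffOn ℝ 2 e₂ (Icc 0 b))
    (hode₂ : ∀ x ∈ Icc 0 b, derivWithin (derivWithin e₂ (Icc 0 b)) (Icc 0 b) x = μ ^ 2 * e₂ x)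
    (hright : e₂ b = 0) (hflux : derivWithin e₂ (Icc 0 b) 0 = derivWithin e₁ (Icc (-a) 0) 0) :
    e₂ 0 = -(coth (μ * a) * Real.tanh (μ * b)) * e₁ 0 := by
  have hdn₁ := derivWithin_right_mul_sinh_of_left_eq_zero (by linarith) he₁ hode₁ hleft
  have hdn₂ := derivWithin_left_mul_sinh_of_right_eq_zero hb he₂ hode₂ hright
  rw [sub_neg_eq_add, zero_add] at hdn₁
  rw [sub_zero, hflux] at hdn₂
  have hsinh : Real.sinh (μ * a) ≠ 0 := Real.sinh_ne_zero.mpr (by positivity)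
  have hcosh : Real.cosh (μ * b) ≠ 0 := (Real.cosh_pos _).ne'
  rw [coth, Real.tanh_eq_sinh_div_cosh]
  field_simp
  refine mul_left_cancel₀ hμ.ne' ?_
  linear_combination Real.sinh (μ * a) * hdn₂ - Real.sinh (μ * b) * hdn₁

theorem dnwr_neutral_pde_convergence
    (μ₀ c r d τ θ a b s : ℝ) (hμ₀ : 0 < μ₀) (ha : 0 < a) (hb : 0 < b)
    (hσ : 0 < s - r - d * Real.exp (-τ * s))
    (μ : ℝ)
    (hμ : μ = Real.sqrt ((s - r - d * Real.exp (-τ * s))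
      / (μ₀ ^ 2 * (1 + c ^ 2 * Real.exp (-τ * s)))))
    (h : ℕ → ℝ)
    (hiter : ∀ k : ℕ, ∃ e₁ e₂ : ℝ → ℝ,
      ContDiffOn ℝ 2 e₁ (Icc (-a) 0) ∧
      (∀ x ∈ Icc (-a) 0,
        μ₀ ^ 2 * (1 + c ^ 2 * Real.exp (-τ * s))
            * derivWithin (derivWithin e₁ (Icc (-a) 0)) (Icc (-a) 0) x
          = (s - r - d * Real.exp (-τ * s)) * e₁ x) ∧
      e₁ (-a) = 0 ∧ e₁ 0 = h k ∧
      ContDiffOn ℝ 2 e₂ (Icc 0 b) ∧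
      (∀ x ∈ Icc 0 b,
        μ₀ ^ 2 * (1 + c ^ 2 * Real.exp (-τ * s))
            * derivWithin (derivWithin e₂ (Icc 0 b)) (Icc 0 b) x
          = (s - r - d * Real.exp (-τ * s)) * e₂ x) ∧
      e₂ b = 0 ∧
      derivWithin e₂ (Icc 0 b) 0 = derivWithin e₁ (Icc (-a) 0) 0 ∧
      h (k + 1) = θ * e₂ 0 + (1 - θ) * h k) :
    (∀ k : ℕ, h k = (1 - θ - θ * coth (μ * a) * Real.tanh (μ * b)) ^ k * h 0) ∧
    (a = b →
      (∀ k : ℕ, h k = (1 - 2 * θ) ^ k * h 0) ∧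
      (θ = 1 / 2 → ∀ k : ℕ, 1 ≤ k → h k = 0) ∧
      (0 < θ → θ < 1 →
        (∀ k : ℕ, |h k| ≤ |1 - 2 * θ| ^ k * |h 0|) ∧
        Tendsto h atTop (nhds 0))) := by
  set σ := s - r - d * Real.exp (-τ * s)
  set D := μ₀ ^ 2 * (1 + c ^ 2 * Real.exp (-τ * s))
  have hD : 0 < D := by positivity
  have hκ : 0 < σ / D := div_pos hσ hD
  have hμpos : 0 < μ := hμ ▸ Real.sqrt_pos.mpr hκ
  have hμsq : μ ^ 2 = σ / D := hμ ▸ Real.sq_sqrt hκ.le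
  have normalize {S : Set ℝ} {e f : ℝ → ℝ} (hode : ∀ x ∈ S, D * f x = σ * e x) :
      ∀ x ∈ S, f x = μ ^ 2 * e x := fun x hx => by
    rw [hμsq, div_mul_eq_mul_div, eq_div_iff hD.ne', mul_comm, hode x hx]
  have hstep : ∀ k, h (k + 1) = (1 - θ - θ * coth (μ * a) * Real.tanh (μ * b)) * h k := by
    intro k
    obtain ⟨e₁, e₂, he₁, hode₁, hleft, hinit, he₂, hode₂, hright, hflux, hupdate⟩ := hiter k
    rw [hupdate, interface_eq_neg_coth_mul_tanh hμpos ha hb he₁ (normalize hode₁) hleft he₂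
      (normalize hode₂) hright hflux, hinit]
    ring
  have hgeom := eq_pow_mul_of_succ_eq_mul hstep
  refine ⟨hgeom, fun hab => ?_⟩
  subst hab
  have hsym (k : ℕ) : h k = (1 - 2 * θ) ^ k * h 0 := by
    rw [hgeom k, mul_assoc θ, coth_mul_tanh (by positivity)]
    ring
  refine ⟨hsym, fun hθ k hk => ?_, fun hθ₀ hθ₁ => ⟨fun k => ?_, ?_⟩⟩
  · rw [hsym k, hθ]
    norm_num [Nat.one_le_iff_ne_zero.mp hk]
  · rw [hsym k, abs_mul, abs_pow]
  · have habs : |1 - 2 * θ| < 1 := abs_lt.mpr ⟨by linarith, by linarith⟩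
    simpa [← hsym] using (tendsto_pow_atTop_nhds_zero_of_abs_lt_one habs).mul_const (h 0)
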